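/- Incidence properties of cells in a complex. Let K be a complex of cells in ℝ^n. Then: (a) for A, B ∈ K, if int(A) ∩ B ≠ ∅ then A ⊂ B; (b) for A, B ∈ K with dim A > dim B, int(A) ∩ B = ∅; (c) for A, B ∈ K of the same dimension, if int(A) ∩ B ≠ ∅ then A = B. -/

import Mathlib

open MeasureTheory Metric Set Filter
open scoped ENNReal NNReal Topology BigOperators

noncomputable section

namespace Paper

/-- Euclidean space ℝ^n. -/
abbrev Vn (n : ℕ) := EuclideanSpace ℝ (Fin n)

/-- The d-dimensional Hausdorff measure on ℝ^n. -/
abbrev HM (n d : ℕ) : Measure (Vn n) := Measure.hausdorffMeasure (d : ℝ)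

/-- The scale radius `r_s(x)`; for `s = ∞` it equals the distance to the complement of `X`. -/
def scaleRadius {n : ℕ} (X : Set (Vn n)) (s : ℝ≥0∞) (x : Vn n) : ℝ≥0∞ :=
  if s = ⊤ then EMetric.infEdist x Xᶜ
  else min (s / (1 + s) * EMetric.infEdist x Xᶜ) s

/-- Real version of the scale radius, for a finite scale `t`. -/
def scaleRadiusReal {n : ℕ} (X : Set (Vn n)) (t : ℝ) (x : Vn n) : ℝ :=
  (scaleRadius X (ENNReal.ofReal t) x).toReal

/-- `E` is relatively closed in `X`. -/
def RelClosedIn {n : ℕ} (X E : Set (Vn n)) : Prop :=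
  ∃ C : Set (Vn n), IsClosed C ∧ E = C ∩ X

/-- `E` is `H^d` locally finite in `X`. -/
def HdLocallyFiniteOn (n d : ℕ) (X E : Set (Vn n)) : Prop :=
  ∀ x ∈ X, ∃ r : ℝ, 0 < r ∧ HM n d (E ∩ ball x r) < ⊤

/-- The core `E^*` of `E` in `X`: the support of `H^d ⌞ E` in `X`. -/
def core (n d : ℕ) (X E : Set (Vn n)) : Set (Vn n) :=
  {x | x ∈ X ∧ ∀ r : ℝ, 0 < r → 0 < HM n d (E ∩ ball x r)}

/-- The support in `X` of a measure `μ`. -/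
def suppIn {n : ℕ} (X : Set (Vn n)) (μ : Measure (Vn n)) : Set (Vn n) :=
  {x | x ∈ X ∧ ∀ r : ℝ, 0 < r → 0 < μ (ball x r)}

/-- A sliding deformation of `E` along the boundary `Γ` in the open set `U ⊆ X`. -/
structure IsSlidingDeformation {n : ℕ} (X Γ E U : Set (Vn n)) (f : Vn n → Vn n) : Prop where
  lipschitz : ∃ K : ℝ≥0, LipschitzOnWith K f E
  mapsToX : ∀ x ∈ E, f x ∈ X
  homotopy : ∃ F : ℝ × Vn n → Vn n,
    ContinuousOn F (Set.Icc (0:ℝ) 1 ×ˢ E) ∧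
    (∀ x ∈ E, F (0, x) = x) ∧
    (∀ x ∈ E, F (1, x) = f x) ∧
    (∀ t ∈ Set.Icc (0:ℝ) 1, ∀ x ∈ E, F (t, x) ∈ X) ∧
    (∀ t ∈ Set.Icc (0:ℝ) 1, ∀ x ∈ E ∩ Γ, F (t, x) ∈ Γ) ∧
    (∀ t ∈ Set.Icc (0:ℝ) 1, ∀ x ∈ E ∩ U, F (t, x) ∈ U) ∧
    ∃ K : Set (Vn n), IsCompact K ∧ K ⊆ E ∩ U ∧
      ∀ t ∈ Set.Icc (0:ℝ) 1, ∀ x ∈ E \ K, F (t, x) = x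

/-- A global sliding deformation in `U` is a sliding deformation of `X` itself. -/
def IsGlobalSlidingDeformation {n : ℕ} (X Γ U : Set (Vn n)) (f : Vn n → Vn n) : Prop :=
  IsSlidingDeformation X Γ X U f

/-- `E` is `(κ,h,s)`-quasiminimal with respect to the energy `I` along `Γ` in `X`. -/
def Quasiminimal {n : ℕ} (I : Measure (Vn n)) (X Γ E : Set (Vn n))
    (κ h : ℝ) (s : ℝ≥0∞) : Prop :=
  ∀ (x : Vn n) (r : ℝ), 0 < r → ENNReal.ofReal r ≤ scaleRadius X s x → ball x r ⊆ X →
    ∀ f : Vn n → Vn n, IsSlidingDeformation X Γ E (ball x r) f →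
      I {y | y ∈ E ∧ f y ≠ y} ≤
        ENNReal.ofReal κ * I (f '' {y | y ∈ E ∧ f y ≠ y}) +
        ENNReal.ofReal h * I (E ∩ ball x (h * r))

/-- Admissible energy in `X`, with comparability constant `Λ` (Definition of the paper). -/
structure AdmissibleEnergyWith {n : ℕ} (d : ℕ) (X : Set (Vn n)) (I : Measure (Vn n))
    (Λ : ℝ) : Prop where
  one_le : 1 ≤ Λ
  le_hausdorff : ∀ A : Set (Vn n), A ⊆ X → I A ≤ ENNReal.ofReal Λ * HM n d A
  hausdorff_le : ∀ A : Set (Vn n), A ⊆ X → HM n d A ≤ ENNReal.ofReal Λ * I A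
  tangentRatio : ∀ x ∈ X, ∀ W : AffineSubspace ℝ (Vn n), x ∈ W →
    Module.finrank ℝ W.direction = d →
    ∀ f : Vn n → Vn n, ContDiff ℝ 1 f → f x = x →
      (∀ v ∈ W.direction, fderiv ℝ f x v = v) →
      Tendsto (fun r : ℝ =>
          I (f '' ((W : Set (Vn n)) ∩ ball x r)) / I ((W : Set (Vn n)) ∩ ball x r))
        (𝓝[>] 0) (𝓝 1)
  elliptic : ∀ x ∈ X, ∃ R : ℝ, 0 < R ∧ closedBall x R ⊆ X ∧ ∃ ε : ℝ → ℝ,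
    (∀ r : ℝ, 0 < r → r ≤ R → 0 ≤ ε r) ∧ Tendsto ε (𝓝[>] 0) (𝓝 0) ∧
    ∀ r : ℝ, 0 < r → r ≤ R → ∀ W : AffineSubspace ℝ (Vn n), x ∈ W →
      Module.finrank ℝ W.direction = d →
      ∀ S : Set (Vn n), IsCompact S → S ⊆ closedBall x r → HM n d S < ⊤ →
        (¬ ∃ ψ : Vn n → Vn n, (∃ K : ℝ≥0, LipschitzOnWith K ψ (closedBall x r)) ∧
            ψ '' closedBall x r ⊆ closedBall x r ∧
            (∀ y ∈ (W : Set (Vn n)) ∩ sphere x r, ψ y = y) ∧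
            ψ '' S ⊆ (W : Set (Vn n)) ∩ sphere x r) →
        I ((W : Set (Vn n)) ∩ ball x r) ≤ I (S ∩ ball x r) + ENNReal.ofReal (ε r * r ^ d)

/-- Admissible energy in `X` (with an unspecified comparability constant). -/
def AdmissibleEnergy {n : ℕ} (d : ℕ) (X : Set (Vn n)) (I : Measure (Vn n)) : Prop :=
  ∃ Λ : ℝ, AdmissibleEnergyWith d X I Λ

/-- `E` is `H^d`-rectifiable: covered, up to an `H^d`-null set, by countably many Lipschitz
images of subsets of `ℝ^d`. -/
def HdRectifiable (n d : ℕ) (E : Set (Vn n)) : Prop :=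
  ∃ (f : ℕ → EuclideanSpace ℝ (Fin d) → Vn n) (A : ℕ → Set (EuclideanSpace ℝ (Fin d))),
    (∀ k, ∃ K : ℝ≥0, LipschitzOnWith K (f k) (A k)) ∧
    HM n d (E \ ⋃ k, f k '' A k) = 0

/-- Blow-up measures `(2r)^{-d} (H^d ⌞ F)(x + r(· - x))`. -/
def blowup (n d : ℕ) (F : Set (Vn n)) (x : Vn n) (r : ℝ) : Measure (Vn n) :=
  (ENNReal.ofReal (2 * r) ^ d)⁻¹ •
    Measure.map (fun y => x + r⁻¹ • (y - x)) ((HM n d).restrict F)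

/-- The linear subspace `W` is the direction of an approximate tangent `d`-plane of `F` at `x`:
the blow-up measures converge weakly to `H^d` restricted to the affine plane `x + W`. -/
def ApproxTangentAt (n d : ℕ) (F : Set (Vn n)) (x : Vn n) (W : Submodule ℝ (Vn n)) : Prop :=
  Module.finrank ℝ W = d ∧
  ∀ g : Vn n → ℝ, Continuous g → HasCompactSupport g →
    Tendsto (fun r : ℝ => ∫ y, g y ∂(blowup n d F x r)) (𝓝[>] 0)
      (𝓝 (∫ y, g y ∂((HM n d).restrict ((fun v => x + v) '' (W : Set (Vn n))))))

/-- Weak convergence of a sequence of Radon measures, in the open set `X`. -/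
def WeakTendstoIn {n : ℕ} (X : Set (Vn n)) (μ : ℕ → Measure (Vn n))
    (ν : Measure (Vn n)) : Prop :=
  ∀ g : Vn n → ℝ, Continuous g → HasCompactSupport g → tsupport g ⊆ X →
    Tendsto (fun i => ∫ y, g y ∂(μ i)) atTop (𝓝 (∫ y, g y ∂ν))

/-- Orthogonal projection onto a subspace, as a continuous linear map of the ambient space. -/
def projL {n : ℕ} (W : Submodule ℝ (Vn n)) : Vn n →L[ℝ] Vn n :=
  W.subtypeL.comp (W.orthogonalProjectionOnto)

/-- `γ` is the Haar probability measure on the Grassmannian of `d`-planes of the subspace `W₀`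
(realized as orthogonal projection operators): it is a probability measure carried by the set of
orthogonal projections onto `d`-dimensional subspaces of `W₀`, invariant under the conjugation
action of the orthogonal transformations preserving `W₀`. -/
def IsGrassHaar (n d : ℕ) (W₀ : Submodule ℝ (Vn n))
    (γ : Measure (Vn n →L[ℝ] Vn n)) : Prop :=
  IsProbabilityMeasure γ ∧
  γ {P | ¬ ∃ W : Submodule ℝ (Vn n), W ≤ W₀ ∧ Module.finrank ℝ W = d ∧ P = projL W} = 0 ∧
  ∀ g : Vn n ≃ₗᵢ[ℝ] Vn n, g '' (W₀ : Set (Vn n)) = (W₀ : Set (Vn n)) →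
    Measure.map (fun P => ((g.toContinuousLinearEquiv : Vn n →L[ℝ] Vn n).comp
        (P.comp ((g.symm.toContinuousLinearEquiv : Vn n →L[ℝ] Vn n))))) γ = γ

/-- `𝓘` is induced by a continuous integrand `i : X × G(d,n) → (0,∞)`. -/
def InducedByContinuousIntegrand {n : ℕ} (d : ℕ) (X : Set (Vn n))
    (I : Measure (Vn n)) : Prop :=
  ∃ i : Vn n × (Vn n →L[ℝ] Vn n) → ℝ,
    ContinuousOn i (X ×ˢ {P | ∃ W : Submodule ℝ (Vn n), Module.finrank ℝ W = d ∧ P = projL W}) ∧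
    (∀ p ∈ X ×ˢ {P | ∃ W : Submodule ℝ (Vn n), Module.finrank ℝ W = d ∧ P = projL W},
      0 < i p) ∧
    ∀ F : Set (Vn n), F ⊆ X → MeasurableSet F → HM n d F < ⊤ → HdRectifiable n d F →
      ∀ τ : Vn n → Submodule ℝ (Vn n),
        (∀ᵐ x ∂((HM n d).restrict F), ApproxTangentAt n d F x (τ x)) →
        I F = ∫⁻ x in F, ENNReal.ofReal (i (x, projL (τ x))) ∂(HM n d)

/-- A Lipschitz neighborhood retract of `X`. -/
def LipNbhdRetract {n : ℕ} (X Γ : Set (Vn n)) : Prop :=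
  ∃ O : Set (Vn n), IsOpen O ∧ Γ ⊆ O ∧ O ⊆ X ∧
    ∃ ρ : Vn n → Vn n, (∃ K : ℝ≥0, LipschitzOnWith K ρ O) ∧ ρ '' O ⊆ Γ ∧ ∀ x ∈ Γ, ρ x = x

/-- `Γ` is locally `C¹`-diffeomorphic to a cone. -/
def LocallyDiffeoToCone {n : ℕ} (X Γ : Set (Vn n)) : Prop :=
  ∀ x ∈ Γ, ∃ R : ℝ, 0 < R ∧ closedBall x R ⊆ X ∧
    ∃ O : Set (Vn n), IsOpen O ∧ x ∈ O ∧
    ∃ φ ψ : Vn n → Vn n,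
      ContDiffOn ℝ 1 φ (ball x R) ∧ ContDiffOn ℝ 1 ψ O ∧
      φ '' ball x R = O ∧ (∀ y ∈ ball x R, ψ (φ y) = y) ∧ (∀ z ∈ O, φ (ψ z) = z) ∧
      φ x = x ∧
      ∃ S : Set (Vn n), IsClosed S ∧ (∀ y ∈ S, ∀ t : ℝ, 0 ≤ t → x + t • (y - x) ∈ S) ∧
        φ '' (Γ ∩ ball x R) = S ∩ O

/-- A dyadic cell of the grid `𝓔_n(k)`. -/
def IsDyadicCell (n k : ℕ) (A : Set (Vn n)) : Prop :=
  ∃ (m : Fin n → ℤ) (α : Fin n → Bool),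
    A = {y : Vn n | ∀ i, y i ∈ Set.Icc ((m i : ℝ) * (2:ℝ) ^ (-(k:ℤ)))
        ((m i : ℝ) * (2:ℝ) ^ (-(k:ℤ)) + (if α i then (2:ℝ) ^ (-(k:ℤ)) else 0))}

/-- `φ` is `M`-bilipschitz on `S`. -/
def BilipschitzOnWith {n : ℕ} (M : ℝ) (φ : Vn n → Vn n) (S : Set (Vn n)) : Prop :=
  ∀ y ∈ S, ∀ z ∈ S, M⁻¹ * dist y z ≤ dist (φ y) (φ z) ∧ dist (φ y) (φ z) ≤ M * dist y z

/-- The grid axiom of Whitney subsets, with constant `M` and scale `t`. -/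
def WhitneyGridWith {n : ℕ} (X Γ : Set (Vn n)) (M t : ℝ) : Prop :=
  1 ≤ M ∧ 0 < t ∧
  ∀ x ∈ Γ, ∃ O : Set (Vn n), IsOpen O ∧
    ∃ φ : Vn n → Vn n, BilipschitzOnWith M φ (ball x (scaleRadiusReal X t x)) ∧
      φ '' ball x (scaleRadiusReal X t x) = O ∧
      ∃ k : ℕ, M⁻¹ * scaleRadiusReal X t x ≤ (2:ℝ) ^ (-(k:ℤ)) ∧
        ∃ S : Set (Set (Vn n)), (∀ A ∈ S, IsDyadicCell n k A) ∧
          φ '' (Γ ∩ ball x (scaleRadiusReal X t x)) = O ∩ ⋃₀ S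

/-- A Whitney subset of `X`, with explicit constants `M`, `t`. -/
def WhitneySubsetWith {n : ℕ} (X Γ : Set (Vn n)) (M t : ℝ) : Prop :=
  RelClosedIn X Γ ∧ LipNbhdRetract X Γ ∧ LocallyDiffeoToCone X Γ ∧ WhitneyGridWith X Γ M t

/-- A Whitney subset of `X`. -/
def WhitneySubset {n : ℕ} (X Γ : Set (Vn n)) : Prop :=
  ∃ M t : ℝ, WhitneySubsetWith X Γ M t

/-! Cells, complexes and charts. -/

/-- The reference cells `∏ [0, α_i]`, `α ∈ {-1,0,1}^n`, of the canonical `n`-complex `E_n`. -/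
def refCell (n : ℕ) (α : Fin n → Fin 3) : Set (Vn n) :=
  {y | ∀ i, y i ∈ Set.Icc (min 0 (![(-1:ℝ), 0, 1] (α i))) (max 0 (![(-1:ℝ), 0, 1] (α i)))}

/-- A similarity of `ℝ^n`. -/
def IsSimilarity {n : ℕ} (f : Vn n → Vn n) : Prop :=
  ∃ r : ℝ, 0 < r ∧ ∀ x y, dist (f x) (f y) = r * dist x y

/-- A cell of `ℝ^n`: a face of a cube, i.e. the image of a reference cell under a similarity. -/
def IsCell (n : ℕ) (A : Set (Vn n)) : Prop :=
  ∃ (f : Vn n → Vn n) (α : Fin n → Fin 3), IsSimilarity f ∧ A = f '' refCell n α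

/-- Interior of a cell relative to its affine span. -/
def cellInt {n : ℕ} (A : Set (Vn n)) : Set (Vn n) :=
  {x | x ∈ A ∧ ∃ ε : ℝ, 0 < ε ∧ ∀ y ∈ (affineSpan ℝ A : Set (Vn n)), dist y x < ε → y ∈ A}

/-- Boundary of a cell relative to its affine span. -/
def cellBry {n : ℕ} (A : Set (Vn n)) : Set (Vn n) := A \ cellInt A

/-- Dimension of a cell: the dimension of its affine span. -/
def cellDim {n : ℕ} (A : Set (Vn n)) : ℕ :=
  Module.finrank ℝ (affineSpan ℝ A).direction

/-- A complex of cells. -/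
def IsComplex {n : ℕ} (K : Set (Set (Vn n))) : Prop :=
  (∀ A ∈ K, IsCell n A) ∧
  (∀ A ∈ K, ∀ B ∈ K, A ≠ B → cellInt A ∩ cellInt B = ∅) ∧
  (∀ x ∈ ⋃₀ K, ∃ U : Set (Vn n), IsOpen U ∧ x ∈ U ∧ {A ∈ K | (A ∩ U).Nonempty}.Finite) ∧
  (∀ A ∈ K, ∃ U : Set (Vn n), IsOpen U ∧ cellInt A ⊆ U ∧
      U ∩ ⋃₀ K ⊆ ⋃ B ∈ {B ∈ K | A ⊆ B}, cellInt B)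

/-- The set `V_A = ⋃ {int B | B ∈ K, A ⊆ B}`. -/
def cellNbhd {n : ℕ} (K : Set (Set (Vn n))) (A : Set (Vn n)) : Set (Vn n) :=
  ⋃ B ∈ {B ∈ K | A ⊆ B}, cellInt B

/-- An `n`-chart: the image of the canonical `n`-complex `E_n` under a similarity. -/
def IsChart {n : ℕ} (K : Set (Set (Vn n))) : Prop :=
  ∃ f : Vn n → Vn n, IsSimilarity f ∧ K = {A | ∃ α : Fin n → Fin 3, A = f '' refCell n α}

/-- A system of `n`-charts. -/
def IsChartSystem {n : ℕ} {ι : Type} (K : ι → Set (Set (Vn n))) : Prop :=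
  (∀ a, IsChart (K a)) ∧
  (∀ A ∈ ⋃ a, K a, ∀ B ∈ ⋃ a, K a, (cellInt A ∩ cellInt B).Nonempty →
      cellInt A ⊆ cellInt B ∨ cellInt B ⊆ cellInt A) ∧
  (∀ x ∈ ⋃ a, ⋃₀ (K a), ∃ U : Set (Vn n), IsOpen U ∧ x ∈ U ∧
      ∃ S : Set (Set (Vn n)), S.Finite ∧ S ⊆ ⋃ a, K a ∧
        ∀ A ∈ ⋃ a, K a, (A ∩ (U ∩ ⋃ a, ⋃₀ (K a))).Nonempty →
          ∃ B ∈ S, cellInt A ⊆ cellInt B)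

/-- The limit of a system of `n`-charts: the collection of its maximal cells. -/
def systemLimit {n : ℕ} {ι : Type} (K : ι → Set (Set (Vn n))) : Set (Set (Vn n)) :=
  {A | A ∈ ⋃ a, K a ∧ ∀ B ∈ ⋃ a, K a, (cellInt A ∩ cellInt B).Nonempty → cellInt B ⊆ cellInt A}

/-- An `n`-complex: the limit of a system of `n`-charts. -/
def IsNComplex {n : ℕ} (K : Set (Set (Vn n))) : Prop :=
  ∃ (ι : Type) (Kα : ι → Set (Set (Vn n))), IsChartSystem Kα ∧ K = systemLimit Kα

/-- A subcomplex of `K`. -/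
def IsSubcomplex {n : ℕ} (K L : Set (Set (Vn n))) : Prop :=
  L ⊆ K ∧ ∀ A ∈ L, ∀ B ∈ K, A ⊆ B → B ∈ L

/-- The rigid open set `U(L)` induced by a set of cells. -/
def rigidOpen {n : ℕ} (L : Set (Set (Vn n))) : Set (Vn n) :=
  ⋃ A ∈ L, cellInt A

/-- `φ` is locally Lipschitz on `S`. -/
def LocallyLipschitzOn {n : ℕ} (S : Set (Vn n)) (φ : Vn n → Vn n) : Prop :=
  ∀ x ∈ S, ∃ U : Set (Vn n), IsOpen U ∧ x ∈ U ∧ ∃ c : ℝ≥0, LipschitzOnWith c φ (U ∩ S)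

/-- The union of interiors of cells of dimension `> d`. -/
def highSkel {n : ℕ} (K : Set (Set (Vn n))) (d : ℕ) : Set (Vn n) :=
  ⋃ A ∈ {A ∈ K | d < cellDim A}, cellInt A

/-- Upper Lebesgue integral (infimum of integrals of measurable majorants). -/
def upperLintegral {α : Type*} [MeasurableSpace α] (μ : Measure α) (s : Set α)
    (f : α → ℝ≥0∞) : ℝ≥0∞ :=
  ⨅ (g : α → ℝ≥0∞) (_ : Measurable g) (_ : ∀ x, f x ≤ g x), ∫⁻ x in s, g x ∂μ

/-- The norm of a linear map restricted to a subset `S`. -/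
def opNormOn {n : ℕ} (u : Vn n →L[ℝ] Vn n) (S : Set (Vn n)) : ℝ :=
  sSup ((fun x => ‖u x‖) '' {x ∈ S | ‖x‖ ≤ 1})

theorem IsSimilarity.exists_affineMap {n : ℕ} {f : Vn n → Vn n} (hf : IsSimilarity f) :
    ∃ g : Vn n →ᵃ[ℝ] Vn n, ⇑g = f := by
  obtain ⟨r, hr, hdist⟩ := hf
  -- `r⁻¹ • f` is an isometry, hence affine by Mazur–Ulam.
  have hiso : Isometry fun x => r⁻¹ • f x := Isometry.of_dist_eq fun x y => by
    rw [dist_smul₀, hdist, Real.norm_eq_abs, abs_of_pos (inv_pos.2 hr),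
      inv_mul_cancel_left₀ hr.ne']
  refine ⟨(r • LinearMap.id : Vn n →ₗ[ℝ] Vn n).toAffineMap.comp
    hiso.affineIsometryOfStrictConvexSpace.toAffineMap, funext fun x => ?_⟩
  change r • (r⁻¹ • f x) = f x
  rw [smul_smul, mul_inv_cancel₀ hr.ne', one_smul]

theorem convex_refCell (n : ℕ) (α : Fin n → Fin 3) : Convex ℝ (refCell n α) := by
  have : refCell n α = ⋂ i, (EuclideanSpace.proj i : Vn n →L[ℝ] ℝ) ⁻¹'
      Icc (min 0 (![(-1:ℝ), 0, 1] (α i))) (max 0 (![(-1:ℝ), 0, 1] (α i))) := by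
    ext y; simp [refCell]
  rw [this]
  exact convex_iInter fun i => (convex_Icc _ _).linear_preimage
    ((EuclideanSpace.proj i : Vn n →L[ℝ] ℝ) : Vn n →ₗ[ℝ] ℝ)

theorem zero_mem_refCell (n : ℕ) (α : Fin n → Fin 3) : 0 ∈ refCell n α :=
  fun i => by simp

theorem IsCell.convex {n : ℕ} {A : Set (Vn n)} (hA : IsCell n A) : Convex ℝ A := by
  obtain ⟨f, α, hf, rfl⟩ := hA
  obtain ⟨g, rfl⟩ := hf.exists_affineMap
  exact (convex_refCell n α).affine_image g

theorem IsCell.nonempty {n : ℕ} {A : Set (Vn n)} (hA : IsCell n A) : A.Nonempty := by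
  obtain ⟨f, α, -, rfl⟩ := hA
  exact ⟨f 0, mem_image_of_mem f (zero_mem_refCell n α)⟩

theorem cellInt_eq_intrinsicInterior {n : ℕ} (A : Set (Vn n)) :
    cellInt A = intrinsicInterior ℝ A := by
  ext x
  simp only [cellInt, mem_intrinsicInterior, mem_interior_iff_mem_nhds, Metric.mem_nhds_iff]
  constructor
  · rintro ⟨hxA, ε, hε, hball⟩
    exact ⟨⟨x, subset_affineSpan ℝ A hxA⟩, ⟨ε, hε, fun y hy => hball y y.2 hy⟩, rfl⟩
  · rintro ⟨y, ⟨ε, hε, hball⟩, rfl⟩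
    refine ⟨hball (mem_ball_self hε), ε, hε, fun z hz hzy => ?_⟩
    have hz' : (⟨z, hz⟩ : affineSpan ℝ A) ∈ ball y ε := by rwa [mem_ball, Subtype.dist_eq]
    exact hball hz'

theorem IsCell.cellInt_nonempty {n : ℕ} {A : Set (Vn n)} (hA : IsCell n A) :
    (cellInt A).Nonempty := by
  rw [cellInt_eq_intrinsicInterior]
  exact hA.nonempty.intrinsicInterior hA.convex

theorem add_smul_sub_mem_cellInt {n : ℕ} {B : Set (Vn n)} (hB : Convex ℝ B)
    {x z : Vn n} (hx : x ∈ B) (hz : z ∈ cellInt B) {t : ℝ} (ht : t ∈ Ioc 0 1) :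
    x + t • (z - x) ∈ cellInt B := by
  obtain ⟨hzB, ε, hε, hball⟩ := hz
  have ht₀ : t ≠ 0 := ht.1.ne'
  refine ⟨hB.add_smul_sub_mem hx hzB (Ioc_subset_Icc_self ht), t * ε, mul_pos ht.1 hε,
    fun y hy hyw => ?_⟩
  -- `y` is the image under the homothety of ratio `t` about `x` of a point `z'` near `z`.
  set z' := x + t⁻¹ • (y - x)
  have hy_eq : y = x + t • (z' - x) := by
    simp only [z', add_sub_cancel_left, smul_smul, mul_inv_cancel₀ ht₀, one_smul, add_sub_cancel]
  have hz'_span : z' ∈ affineSpan ℝ B := by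
    have hxs := subset_affineSpan ℝ B hx
    simpa [z', add_comm x] using AffineSubspace.smul_vsub_vadd_mem _ t⁻¹ hy hxs hxs
  have hz'_dist : dist z' z < ε := by
    have : z' - z = t⁻¹ • (y - (x + t • (z - x))) := by
      rw [smul_sub, smul_add, smul_smul, inv_mul_cancel₀ ht₀, one_smul]
      simp only [z', smul_sub]; abel
    rw [dist_eq_norm, this, norm_smul, ← dist_eq_norm, Real.norm_eq_abs,
      abs_of_pos (inv_pos.2 ht.1), inv_mul_lt_iff₀ ht.1]
    exact hyw
  rw [hy_eq]
  exact hB.add_smul_sub_mem hx (hball z' hz'_span hz'_dist) (Ioc_subset_Icc_self ht)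

theorem subset_closure_cellInt {n : ℕ} {B : Set (Vn n)} (hB : Convex ℝ B)
    (hB' : (cellInt B).Nonempty) : B ⊆ closure (cellInt B) := by
  obtain ⟨z, hz⟩ := hB'
  intro x hx
  have hlim : Tendsto (fun t : ℝ => x + t • (z - x)) (𝓝[>] 0) (𝓝 x) := by
    have : Continuous fun t : ℝ => x + t • (z - x) := by fun_prop
    simpa using (this.tendsto 0).mono_left nhdsWithin_le_nhds
  refine mem_closure_of_tendsto hlim ?_
  filter_upwards [Ioc_mem_nhdsGT one_pos] with t ht
  exact add_smul_sub_mem_cellInt hB hx hz ht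

theorem cellInt_mono_of_affineSpan_eq {n : ℕ} {A B : Set (Vn n)} (hAB : A ⊆ B)
    (hspan : affineSpan ℝ A = affineSpan ℝ B) : cellInt A ⊆ cellInt B := by
  rintro x ⟨hxA, ε, hε, hball⟩
  exact ⟨hAB hxA, ε, hε, fun y hy hyx => hAB (hball y (hspan ▸ hy) hyx)⟩

theorem cellDim_mono {n : ℕ} {A B : Set (Vn n)} (h : A ⊆ B) : cellDim A ≤ cellDim B :=
  Submodule.finrank_mono (AffineSubspace.direction_le (affineSpan_mono ℝ h))

theorem affineSpan_eq_of_cellDim_eq {n : ℕ} {A B : Set (Vn n)} (hA : A.Nonempty) (hAB : A ⊆ B)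
    (hdim : cellDim A = cellDim B) : affineSpan ℝ A = affineSpan ℝ B := by
  have hle := affineSpan_mono ℝ hAB
  refine AffineSubspace.eq_of_direction_eq_of_nonempty_of_le ?_ (hA.affineSpan ℝ) hle
  exact Submodule.eq_of_le_of_finrank_eq (AffineSubspace.direction_le hle) hdim

namespace IsComplex

variable {n : ℕ} {K : Set (Set (Vn n))}

theorem eq_of_mem_cellInt (hK : IsComplex K) {A B : Set (Vn n)} (hA : A ∈ K) (hB : B ∈ K)
    {x : Vn n} (hxA : x ∈ cellInt A) (hxB : x ∈ cellInt B) : A = B := by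
  by_contra hne
  exact (hK.2.1 A hA B hB hne).subset ⟨hxA, hxB⟩

theorem subset_of_cellInt_inter_nonempty (hK : IsComplex K) {A B : Set (Vn n)} (hA : A ∈ K)
    (hB : B ∈ K) (hAB : (cellInt A ∩ B).Nonempty) : A ⊆ B := by
  obtain ⟨x, hxA, hxB⟩ := hAB
  obtain ⟨U, hU, hAU, hUK⟩ := hK.2.2.2 A hA
  have hBcell := hK.1 B hB
  -- `x ∈ B` is a limit of points of `int B`, one of which lies in the neighbourhood `U ⊆ V_A`.
  obtain ⟨w, hwU, hwB⟩ := mem_closure_iff.1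
    (subset_closure_cellInt hBcell.convex hBcell.cellInt_nonempty hxB) U hU (hAU hxA)
  obtain ⟨C, ⟨hC, hAC⟩, hwC⟩ := mem_iUnion₂.1 (hUK ⟨hwU, B, hB, hwB.1⟩)
  rwa [← hK.eq_of_mem_cellInt hC hB hwC hwB]

theorem cellInt_inter_eq_empty_of_cellDim_lt (hK : IsComplex K) {A B : Set (Vn n)}
    (hA : A ∈ K) (hB : B ∈ K) (hdim : cellDim B < cellDim A) : cellInt A ∩ B = ∅ := by
  by_contra h
  have hAB := hK.subset_of_cellInt_inter_nonempty hA hB (nonempty_iff_ne_empty.2 h)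
  exact (cellDim_mono hAB).not_gt hdim

theorem eq_of_cellDim_eq (hK : IsComplex K) {A B : Set (Vn n)} (hA : A ∈ K) (hB : B ∈ K)
    (hdim : cellDim A = cellDim B) (hAB : (cellInt A ∩ B).Nonempty) : A = B := by
  have hsub := hK.subset_of_cellInt_inter_nonempty hA hB hAB
  have hspan := affineSpan_eq_of_cellDim_eq (hK.1 A hA).nonempty hsub hdim
  obtain ⟨x, hxA, -⟩ := hAB
  exact hK.eq_of_mem_cellInt hA hB hxA (cellInt_mono_of_affineSpan_eq hsub hspan hxA)

end IsComplex

/-- **Incidence properties of cells in a complex.** -/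
theorem complex_incidence (n : ℕ) (K : Set (Set (Vn n))) (hK : IsComplex K) :
    (∀ A ∈ K, ∀ B ∈ K, (cellInt A ∩ B).Nonempty → A ⊆ B) ∧
    (∀ A ∈ K, ∀ B ∈ K, cellDim B < cellDim A → cellInt A ∩ B = ∅) ∧
    (∀ A ∈ K, ∀ B ∈ K, cellDim A = cellDim B → (cellInt A ∩ B).Nonempty → A = B) :=
  ⟨fun _ hA _ hB => hK.subset_of_cellInt_inter_nonempty hA hB,
    fun _ hA _ hB => hK.cellInt_inter_eq_empty_of_cellDim_lt hA hB,
    fun _ hA _ hB => hK.eq_of_cellDim_eq hA hB⟩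

end Paper
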